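/- Let p > 2 and κ > 0 satisfy κ < p / ( 16d(p−1)^{1−1/p} + 8dp ). Then there exists a constant C > 0, depending only on d, p, κ and L (but not on N), such that for every integer N ≥ 2 and every index i ∈ {1,…,N}, Σ_{x∈Λ} ∫ |Φ_x^i|^p dμ_{Λ,N,κ}(Φ) ≤ C, where Φ_x^i denotes the i-th coordinate of Φ_x ∈ ℝ^N. -/

import Mathlib

noncomputable section
open MeasureTheory Real

/-- The sites of the discrete torus `(ℤ/Lℤ)^d`. -/
abbrev Site (d L : ℕ) := Fin d → ZMod L

/-- The sphere of radius `√N` centered at the origin in `ℝ^N`. -/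
abbrev Sph (N : ℕ) := Metric.sphere (0 : EuclideanSpace ℝ (Fin N)) (Real.sqrt N)

/-- The spin `O(N)` interaction energy `2κ Σ_x Σ_j (⟨Φ_x, Φ_{x+e_j}⟩ + ⟨Φ_x, Φ_{x−e_j}⟩)`. -/
def energy (d L N : ℕ) [NeZero L] (κ : ℝ) (Φ : Site d L → Sph N) : ℝ :=
  2 * κ * ∑ x : Site d L, ∑ j : Fin d,
    ((inner ℝ ((Φ x : EuclideanSpace ℝ (Fin N)))
        ((Φ (x + Pi.single j 1) : EuclideanSpace ℝ (Fin N))) : ℝ)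
      + (inner ℝ ((Φ x : EuclideanSpace ℝ (Fin N)))
        ((Φ (x - Pi.single j 1) : EuclideanSpace ℝ (Fin N))) : ℝ))

/-- The spin `O(N)` measure `μ_{Λ,N,κ}`: the normalized exponential tilt of the product of
the single-site measures `σ` by the interaction energy. -/
def spinMeasure (d L N : ℕ) [NeZero L] (κ : ℝ) (σ : Measure (Sph N)) [SigmaFinite σ] :
    Measure (Site d L → Sph N) :=
  (Measure.pi fun _ : Site d L => σ).withDensity fun Φ =>
    ENNReal.ofReal (Real.exp (energy d L N κ Φ) /
      ∫ Ψ, Real.exp (energy d L N κ Ψ) ∂(Measure.pi fun _ : Site d L => σ))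

namespace SpinAux

/-- 1D: `|x|^s * exp (-x²)` is integrable for `s ≥ 0`. -/
lemma integrable_abs_rpow_mul_exp {s : ℝ} (hs : 0 ≤ s) :
    Integrable fun x : ℝ => |x| ^ s * exp (-x ^ 2) := by
  have hIoi : IntegrableOn (fun x : ℝ => |x| ^ s * exp (-x ^ 2)) (Set.Ioi 0) := by
    have h := integrableOn_rpow_mul_exp_neg_mul_sq one_pos (s := s) (by linarith)
    simp only [neg_one_mul] at h
    refine h.congr_fun (fun x hx => ?_) measurableSet_Ioi
    rw [abs_of_pos hx]
  rw [← integrableOn_univ, ← Set.Iio_union_Ici (a := (0 : ℝ)), integrableOn_union,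
    integrableOn_Ici_iff_integrableOn_Ioi]
  refine ⟨?_, hIoi⟩
  rw [← (Measure.measurePreserving_neg (volume : Measure ℝ)).integrableOn_comp_preimage
      (Homeomorph.neg ℝ).measurableEmbedding]
  simp only [Function.comp_def, neg_sq, Set.neg_preimage, Set.neg_Iio, neg_zero, abs_neg, neg_neg]
  exact hIoi

lemma integrable_exp_neg_sq : Integrable fun x : ℝ => exp (-x ^ 2) := by
  have := integrable_exp_neg_mul_sq (b := 1) one_pos
  simpa only [neg_one_mul] using this

lemma integrable_sq_mul_exp : Integrable fun x : ℝ => x ^ 2 * exp (-x ^ 2) := by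
  refine (integrable_abs_rpow_mul_exp (s := (2 : ℝ)) (by norm_num)).congr
    (Filter.Eventually.of_forall fun x => ?_)
  simp only [Real.rpow_two, sq_abs]

lemma sq_mul_exp_pos : 0 < ∫ x : ℝ, x ^ 2 * exp (-x ^ 2) := by
  rw [MeasureTheory.integral_pos_iff_support_of_nonneg
      (fun x => by positivity) integrable_sq_mul_exp]
  have hsub : Set.Ioi (0 : ℝ) ⊆ Function.support fun x : ℝ => x ^ 2 * exp (-x ^ 2) := by
    intro x hx
    have : (0:ℝ) < x := hx
    simp only [Function.mem_support]
    positivity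
  calc (0 : ENNReal) < volume (Set.Ioi (0:ℝ)) := by simp [Real.volume_Ioi]
    _ ≤ volume (Function.support fun x : ℝ => x ^ 2 * exp (-x ^ 2)) := measure_mono hsub

lemma exp_neg_sq_pos : 0 < ∫ x : ℝ, exp (-x ^ 2) := by
  have := integral_gaussian (1 : ℝ)
  simp only [neg_one_mul] at this
  rw [this]
  positivity

/-- Product computation for a single-coordinate function against the Gaussian weight. -/
lemma coord_integral {N : ℕ} (h : ℝ → ℝ)
    (hh : Integrable (fun t : ℝ => h t * exp (-t ^ 2))) (j : Fin N) :
    Integrable (fun g : EuclideanSpace ℝ (Fin N) => h (g j) * exp (-‖g‖ ^ 2)) ∧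
    ∫ g : EuclideanSpace ℝ (Fin N), h (g j) * exp (-‖g‖ ^ 2)
      = (∫ t : ℝ, h t * exp (-t ^ 2)) * (∫ t : ℝ, exp (-t ^ 2)) ^ (N - 1) := by
  classical
  set es := (MeasurableEquiv.toLp 2 (Fin N → ℝ)).symm with hes_def
  have hmp : MeasurePreserving (es.symm) volume volume :=
    (EuclideanSpace.volume_preserving_symm_measurableEquiv_toLp (Fin N)).symm
  set F : Fin N → ℝ → ℝ := fun k t => (if k = j then h t else 1) * exp (-t ^ 2) with hF
  have happ : ∀ (y : Fin N → ℝ) (k : Fin N), (es.symm y) k = y k := fun y k => rfl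
  have hnorm : ∀ y : Fin N → ℝ, ‖es.symm y‖ ^ 2 = ∑ k, (y k) ^ 2 := by
    intro y
    rw [EuclideanSpace.norm_eq, Real.sq_sqrt (by positivity)]
    refine Finset.sum_congr rfl fun k _ => by rw [happ, Real.norm_eq_abs, sq_abs]
  have hfun : ∀ y : Fin N → ℝ,
      h ((es.symm y) j) * exp (-‖es.symm y‖ ^ 2) = ∏ k, F k (y k) := by
    intro y
    rw [happ, hnorm]
    have : exp (-∑ k, (y k) ^ 2) = ∏ k, exp (-(y k) ^ 2) := by
      rw [show -∑ k, (y k) ^ 2 = ∑ k, -((y k) ^ 2) by simp, Real.exp_sum]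
    rw [this, hF]
    simp only
    rw [Finset.prod_mul_distrib, Finset.prod_ite_eq' Finset.univ j (fun x => h (y x))]
    · simp
  have hFint : ∀ k, Integrable (F k) := by
    intro k
    rcases eq_or_ne k j with hk | hk
    · subst hk; simpa [hF] using hh
    · simp only [hF, if_neg hk, one_mul]
      exact integrable_exp_neg_sq
  constructor
  · rw [← hmp.integrable_comp_emb es.symm.measurableEmbedding]
    have : ((fun g : EuclideanSpace ℝ (Fin N) => h (g j) * exp (-‖g‖ ^ 2)) ∘ es.symm)
        = fun y : Fin N → ℝ => ∏ k, F k (y k) := funext fun y => hfun y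
    rw [this]
    exact Integrable.fintype_prod (f := F) hFint
  · rw [← hmp.integral_comp' (fun g : EuclideanSpace ℝ (Fin N) => h (g j) * exp (-‖g‖ ^ 2))]
    have : (fun y : Fin N → ℝ => h ((es.symm y) j) * exp (-‖es.symm y‖ ^ 2))
        = fun y : Fin N → ℝ => ∏ k, F k (y k) := funext fun y => hfun y
    rw [this, MeasureTheory.integral_fintype_prod_volume_eq_prod (f := F)]
    have hvals : ∀ k, (∫ t : ℝ, F k t)
        = if k = j then ∫ t : ℝ, h t * exp (-t ^ 2) else ∫ t : ℝ, exp (-t ^ 2) := by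
      intro k
      rcases eq_or_ne k j with hk | hk
      · subst hk; simp [hF]
      · simp [hF, if_neg hk]
    rw [Finset.prod_congr rfl fun k _ => hvals k,
      ← Finset.mul_prod_erase Finset.univ _ (Finset.mem_univ j), if_pos rfl]
    congr 1
    rw [Finset.prod_congr rfl fun k hk => if_neg (Finset.ne_of_mem_erase hk),
      Finset.prod_const, Finset.card_erase_of_mem (Finset.mem_univ j), Finset.card_univ,
      Fintype.card_fin]

/-- The `N`-independent constant. -/
def Cp (p : ℝ) : ℝ :=
  ((∫ t : ℝ, exp (-t ^ 2)) / ∫ t : ℝ, t ^ 2 * exp (-t ^ 2)) ^ (p / 2) *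
    ((∫ t : ℝ, |t| ^ p * exp (-t ^ 2)) / ∫ t : ℝ, exp (-t ^ 2))

lemma Cp_nonneg (p : ℝ) : 0 ≤ Cp p := by
  unfold Cp
  have h1 : (0:ℝ) ≤ ∫ t : ℝ, exp (-t ^ 2) := le_of_lt exp_neg_sq_pos
  have h2 : (0:ℝ) ≤ ∫ t : ℝ, |t| ^ p * exp (-t ^ 2) :=
    integral_nonneg fun t => by positivity
  positivity

lemma measurable_coord_rpow {N : ℕ} (i : Fin N) {p : ℝ} (hp : 0 ≤ p) :
    Measurable fun v : EuclideanSpace ℝ (Fin N) => |v i| ^ p := by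
  have : (fun v : EuclideanSpace ℝ (Fin N) => |v i| ^ p)
      = fun v => |(inner ℝ (EuclideanSpace.single i (1:ℝ)) v : ℝ)| ^ p := by
    funext v; rw [EuclideanSpace.inner_single_left]; norm_num
  rw [this]
  exact ((continuous_const.inner continuous_id).abs.rpow_const fun _ => Or.inr hp).measurable

/-- Core moment bound: any rotation-invariant probability measure on the sphere of radius `√N`
in `ℝ^N` has `i`-th coordinate `p`-moment at most `Cp p`. -/
theorem moment_bound {N : ℕ} {p : ℝ} (hp : 2 < p)
    (ν : Measure (EuclideanSpace ℝ (Fin N))) [IsProbabilityMeasure ν]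
    (hsph : ∀ᵐ v ∂ν, ‖v‖ = Real.sqrt N)
    (hinv : ∀ O : EuclideanSpace ℝ (Fin N) ≃ₗᵢ[ℝ] EuclideanSpace ℝ (Fin N),
      ν.map O = ν)
    (i : Fin N) :
    ∫ v, |v i| ^ p ∂ν ≤ Cp p := by
  classical
  have hp0 : (0:ℝ) < p := by linarith
  have hp0' : (0:ℝ) ≤ p := hp0.le
  have hN : 0 < N := i.pos
  have hNR : (0:ℝ) < (N:ℝ) := by exact_mod_cast hN
  set c1 : ℝ := ∫ t : ℝ, exp (-t ^ 2) with hc1def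
  set g2 : ℝ := ∫ t : ℝ, t ^ 2 * exp (-t ^ 2) with hg2def
  set gp : ℝ := ∫ t : ℝ, |t| ^ p * exp (-t ^ 2) with hgpdef
  have hc1 : 0 < c1 := exp_neg_sq_pos
  have hg2 : 0 < g2 := sq_mul_exp_pos
  have hgp : 0 ≤ gp := integral_nonneg fun t => by positivity
  have ihp : Integrable fun t : ℝ => |t| ^ p * exp (-t ^ 2) :=
    integrable_abs_rpow_mul_exp hp0'
  -- coordinate integrals on EuclideanSpace ℝ (Fin N)
  obtain ⟨iKp, hKp⟩ := coord_integral (fun t => |t| ^ p) ihp i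
  have co2 := fun j : Fin N => coord_integral (fun t => t ^ 2) integrable_sq_mul_exp j
  obtain ⟨iM0, hM0⟩ := coord_integral (fun _ => (1:ℝ))
    (integrable_exp_neg_sq.congr (Filter.Eventually.of_forall fun t => (one_mul _).symm)) i
  have iM : Integrable fun g : EuclideanSpace ℝ (Fin N) => exp (-‖g‖ ^ 2) :=
    iM0.congr (Filter.Eventually.of_forall fun g => one_mul _)
  have hpowN : c1 ^ N = c1 ^ (N - 1) * c1 := by
    rw [← pow_succ, Nat.sub_add_cancel hN]
  have hM : ∫ g : EuclideanSpace ℝ (Fin N), exp (-‖g‖ ^ 2) = c1 ^ N := by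
    have h2 := hM0
    simp only [one_mul] at h2
    rw [h2, ← hc1def, hpowN]
    exact mul_comm _ _
  -- norm-squared expansion
  have hnormsq : ∀ g : EuclideanSpace ℝ (Fin N), ‖g‖ ^ 2 = ∑ j, (g j) ^ 2 := by
    intro g
    rw [EuclideanSpace.norm_eq, Real.sq_sqrt (by positivity)]
    exact Finset.sum_congr rfl fun j _ => by rw [Real.norm_eq_abs, sq_abs]
  have hQfun : (fun g : EuclideanSpace ℝ (Fin N) => ‖g‖ ^ 2 * exp (-‖g‖ ^ 2))
      = fun g : EuclideanSpace ℝ (Fin N) => ∑ j, (g j) ^ 2 * exp (-‖g‖ ^ 2) := by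
    funext g; rw [← Finset.sum_mul, hnormsq g]
  have iQ : Integrable fun g : EuclideanSpace ℝ (Fin N) => ‖g‖ ^ 2 * exp (-‖g‖ ^ 2) := by
    rw [hQfun]; exact integrable_finset_sum _ fun j _ => (co2 j).1
  have hQ : ∫ g : EuclideanSpace ℝ (Fin N), ‖g‖ ^ 2 * exp (-‖g‖ ^ 2) = (N:ℝ) * g2 * c1 ^ (N - 1) := by
    rw [hQfun, integral_finset_sum _ fun j _ => (co2 j).1]
    simp only [(co2 _).2]
    rw [Finset.sum_const, Finset.card_univ, Fintype.card_fin, nsmul_eq_mul]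
    ring
  -- integrability of ‖g‖^p weight
  have hnle : ∀ g : EuclideanSpace ℝ (Fin N), ‖g‖ ≤ ∑ j, |g j| := by
    intro g
    rw [EuclideanSpace.norm_eq]
    have : ∑ j, ‖g j‖ ^ 2 ≤ (∑ j, |g j|) ^ 2 := by
      simp only [Real.norm_eq_abs]
      exact Finset.sum_sq_le_sq_sum_of_nonneg fun j _ => abs_nonneg _
    calc √(∑ j, ‖g j‖ ^ 2) ≤ √((∑ j, |g j|) ^ 2) := Real.sqrt_le_sqrt this
      _ = ∑ j, |g j| := Real.sqrt_sq (Finset.sum_nonneg fun j _ => abs_nonneg _)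
  have hcontw : Continuous fun g : EuclideanSpace ℝ (Fin N) => exp (-‖g‖ ^ 2) :=
    Real.continuous_exp.comp ((continuous_norm.pow 2).neg)
  have hcontnp : Continuous fun g : EuclideanSpace ℝ (Fin N) => ‖g‖ ^ p :=
    continuous_norm.rpow_const fun _ => Or.inr hp0'
  have iGp : Integrable fun g : EuclideanSpace ℝ (Fin N) => ‖g‖ ^ p * exp (-‖g‖ ^ 2) := by
    refine Integrable.mono'
      (g := fun g : EuclideanSpace ℝ (Fin N) => (N:ℝ) ^ (p - 1) * ∑ j, |g j| ^ p * exp (-‖g‖ ^ 2))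
      (((integrable_finset_sum _ fun j _ =>
          (coord_integral (fun t => |t| ^ p) ihp j).1).const_mul _))
      ((hcontnp.mul hcontw).aestronglyMeasurable)
      (Filter.Eventually.of_forall fun g => ?_)
    rw [Real.norm_eq_abs, abs_of_nonneg (by positivity)]
    have h1 : ‖g‖ ^ p ≤ (∑ j, |g j|) ^ p :=
      Real.rpow_le_rpow (norm_nonneg _) (hnle g) hp0'
    have h2 : (∑ j, |g j|) ^ p ≤ (N:ℝ) ^ (p - 1) * ∑ j, |g j| ^ p := by
      have := Real.rpow_sum_le_const_mul_sum_rpow_of_nonneg (f := fun j => |g j|)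
        Finset.univ (by linarith : (1:ℝ) ≤ p) (fun j _ => abs_nonneg _)
      simpa [Finset.card_univ, Fintype.card_fin] using this
    calc ‖g‖ ^ p * exp (-‖g‖ ^ 2) ≤ ((N:ℝ) ^ (p - 1) * ∑ j, |g j| ^ p) * exp (-‖g‖ ^ 2) :=
          mul_le_mul_of_nonneg_right (h1.trans h2) (exp_pos _).le
      _ = (N:ℝ) ^ (p - 1) * ∑ j, |g j| ^ p * exp (-‖g‖ ^ 2) := by
          rw [mul_assoc, Finset.sum_mul]
  -- lower bound for Gp via Bernoulli
  set S : ℝ := (N:ℝ) * g2 / c1 with hSdef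
  have hS : 0 < S := by positivity
  have hrw2p : ∀ x : ℝ, 0 ≤ x → (x ^ 2) ^ (p / 2) = x ^ p := by
    intro x hx
    rw [← Real.rpow_natCast x 2, ← Real.rpow_mul hx]
    congr 1
    push_cast
    ring
  have hGp_low : S ^ (p / 2) * c1 ^ N ≤ ∫ g : EuclideanSpace ℝ (Fin N), ‖g‖ ^ p * exp (-‖g‖ ^ 2) := by
    have hmono : ∀ g : EuclideanSpace ℝ (Fin N),
        (1 + p / 2 * (‖g‖ ^ 2 / S - 1)) * exp (-‖g‖ ^ 2)
          ≤ (S ^ (p / 2))⁻¹ * (‖g‖ ^ p * exp (-‖g‖ ^ 2)) := by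
      intro g
      have ht : (0:ℝ) ≤ ‖g‖ ^ 2 / S := by positivity
      have hb := one_add_mul_self_le_rpow_one_add
        (s := ‖g‖ ^ 2 / S - 1) (by linarith) (p := p / 2) (by linarith)
      rw [show (1 : ℝ) + (‖g‖ ^ 2 / S - 1) = ‖g‖ ^ 2 / S by ring] at hb
      have hval : (‖g‖ ^ 2 / S) ^ (p / 2) = (S ^ (p / 2))⁻¹ * ‖g‖ ^ p := by
        rw [Real.div_rpow (by positivity) hS.le, hrw2p _ (norm_nonneg _)]
        ring
      rw [hval] at hb
      calc (1 + p / 2 * (‖g‖ ^ 2 / S - 1)) * exp (-‖g‖ ^ 2)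
          ≤ ((S ^ (p / 2))⁻¹ * ‖g‖ ^ p) * exp (-‖g‖ ^ 2) :=
            mul_le_mul_of_nonneg_right hb (exp_pos _).le
        _ = (S ^ (p / 2))⁻¹ * (‖g‖ ^ p * exp (-‖g‖ ^ 2)) := by ring
    have hLfun : (fun g : EuclideanSpace ℝ (Fin N) => (1 + p / 2 * (‖g‖ ^ 2 / S - 1)) * exp (-‖g‖ ^ 2))
        = fun g : EuclideanSpace ℝ (Fin N) => (1 - p / 2) * exp (-‖g‖ ^ 2)
            + (p / 2 / S) * (‖g‖ ^ 2 * exp (-‖g‖ ^ 2)) := by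
      funext g; field_simp; ring
    have hLint : Integrable
        (fun g : EuclideanSpace ℝ (Fin N) => (1 + p / 2 * (‖g‖ ^ 2 / S - 1)) * exp (-‖g‖ ^ 2)) := by
      rw [hLfun]; exact (iM.const_mul _).add (iQ.const_mul _)
    have hLval : ∫ g : EuclideanSpace ℝ (Fin N), (1 + p / 2 * (‖g‖ ^ 2 / S - 1)) * exp (-‖g‖ ^ 2) = c1 ^ N := by
      rw [hLfun, integral_add (iM.const_mul _) (iQ.const_mul _),
        integral_const_mul, integral_const_mul, hM, hQ]
      rw [hSdef, hpowN]
      field_simp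
      ring
    have hint := integral_mono hLint (iGp.const_mul _) hmono
    rw [hLval, integral_const_mul] at hint
    have := mul_le_mul_of_nonneg_left hint (le_of_lt (Real.rpow_pos_of_pos hS (p / 2)))
    rw [← mul_assoc, mul_inv_cancel₀ (ne_of_gt (Real.rpow_pos_of_pos hS (p / 2))), one_mul]
      at this
    linarith
  -- the Gaussian measure γ
  have hwmeas : Measurable fun g : EuclideanSpace ℝ (Fin N) => ENNReal.ofReal (exp (-‖g‖ ^ 2)) :=
    hcontw.measurable.ennreal_ofReal
  set γ : Measure (EuclideanSpace ℝ (Fin N)) := volume.withDensity (fun g => ENNReal.ofReal (exp (-‖g‖ ^ 2)))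
    with hγdef
  have γreal : ∀ f : EuclideanSpace ℝ (Fin N) → ℝ, Measurable f → (∀ g, 0 ≤ f g) →
      Integrable (fun g : EuclideanSpace ℝ (Fin N) => f g * exp (-‖g‖ ^ 2)) volume →
      ∫⁻ g, ENNReal.ofReal (f g) ∂γ = ENNReal.ofReal (∫ g : EuclideanSpace ℝ (Fin N), f g * exp (-‖g‖ ^ 2)) := by
    intro f hfm hfnn hfi
    rw [hγdef, lintegral_withDensity_eq_lintegral_mul volume hwmeas hfm.ennreal_ofReal,
      ofReal_integral_eq_lintegral_ofReal hfi
        (Filter.Eventually.of_forall fun g => mul_nonneg (hfnn g) (exp_pos _).le)]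
    refine lintegral_congr fun g => ?_
    simp only [Pi.mul_apply]
    rw [← ENNReal.ofReal_mul (exp_pos _).le]
    exact congrArg ENNReal.ofReal (mul_comm _ _)
  have hγfin : IsFiniteMeasure γ := by
    constructor
    rw [hγdef, withDensity_apply _ MeasurableSet.univ, setLIntegral_univ,
      ← ofReal_integral_eq_lintegral_ofReal iM
        (Filter.Eventually.of_forall fun g => (exp_pos _).le)]
    exact ENNReal.ofReal_lt_top
  have γinv : ∀ (O : EuclideanSpace ℝ (Fin N) ≃ₗᵢ[ℝ] EuclideanSpace ℝ (Fin N)) (f : EuclideanSpace ℝ (Fin N) → ENNReal), Measurable f →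
      ∫⁻ g, f (O g) ∂γ = ∫⁻ g, f g ∂γ := by
    intro O f hf
    have hOm : Measurable (O : EuclideanSpace ℝ (Fin N) → EuclideanSpace ℝ (Fin N)) := O.continuous.measurable
    have hcomp : Measurable fun g : EuclideanSpace ℝ (Fin N) => f (O g) := hf.comp hOm
    rw [hγdef, lintegral_withDensity_eq_lintegral_mul volume hwmeas hcomp,
      lintegral_withDensity_eq_lintegral_mul volume hwmeas hf]
    simp only [Pi.mul_apply]
    have key : ∀ g : EuclideanSpace ℝ (Fin N),
        ENNReal.ofReal (exp (-‖g‖ ^ 2)) * f (O g)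
          = (fun b => ENNReal.ofReal (exp (-‖b‖ ^ 2)) * f b) (O g) := by
      intro g; simp only [O.norm_map]
    rw [lintegral_congr key]
    exact O.measurePreserving.lintegral_comp (hwmeas.mul hf)
  have νinv : ∀ (O : EuclideanSpace ℝ (Fin N) ≃ₗᵢ[ℝ] EuclideanSpace ℝ (Fin N)) (f : EuclideanSpace ℝ (Fin N) → ENNReal), Measurable f →
      ∫⁻ v, f (O v) ∂ν = ∫⁻ v, f v ∂ν := by
    intro O f hf
    have h := lintegral_map hf O.continuous.measurable (μ := ν)
    rw [hinv O] at h
    exact h.symm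
  -- the inner-product integrands
  set fE : EuclideanSpace ℝ (Fin N) → EuclideanSpace ℝ (Fin N) → ENNReal := fun e v => ENNReal.ofReal (|(inner ℝ e v : ℝ)| ^ p) with hfEdef
  have hfE : ∀ e : EuclideanSpace ℝ (Fin N), Measurable (fE e) := fun e =>
    ((continuous_const.inner continuous_id).abs.rpow_const
      fun _ => Or.inr hp0').measurable.ennreal_ofReal
  have Aeq : ∀ (ρ : Measure (EuclideanSpace ℝ (Fin N))),
      (∀ (O : EuclideanSpace ℝ (Fin N) ≃ₗᵢ[ℝ] EuclideanSpace ℝ (Fin N)) (f : EuclideanSpace ℝ (Fin N) → ENNReal), Measurable f →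
        ∫⁻ x, f (O x) ∂ρ = ∫⁻ x, f x ∂ρ) →
      ∀ e e' : EuclideanSpace ℝ (Fin N), ‖e‖ = ‖e'‖ →
        ∫⁻ v, fE e v ∂ρ = ∫⁻ v, fE e' v ∂ρ := by
    intro ρ hρ e e' hee
    set O := Submodule.reflection (Submodule.span ℝ {e - e'})ᗮ with hOdef
    have hOe : O e = e' := Submodule.reflection_sub hee
    have hOe' : O e' = e := by
      rw [← hOe, hOdef, Submodule.reflection_reflection]
    calc ∫⁻ v, fE e v ∂ρ = ∫⁻ v, fE e (O v) ∂ρ := (hρ O (fE e) (hfE e)).symm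
      _ = ∫⁻ v, fE e' v ∂ρ := by
          refine lintegral_congr fun v => ?_
          rw [hfEdef]
          simp only
          rw [← hOe', LinearIsometryEquiv.inner_map_map]
  have hsingle_norm : ‖(EuclideanSpace.single i (1:ℝ) : EuclideanSpace ℝ (Fin N))‖ = 1 := by
    rw [EuclideanSpace.norm_single]; norm_num
  have hsingle_inner : ∀ v : EuclideanSpace ℝ (Fin N), (inner ℝ (EuclideanSpace.single i (1:ℝ)) v : ℝ) = v i := by
    intro v; rw [EuclideanSpace.inner_single_left]; norm_num
  set I' : ENNReal := ∫⁻ v, ENNReal.ofReal (|v i| ^ p) ∂ν with hI'def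
  set K' : ENNReal := ∫⁻ g, ENNReal.ofReal (|g i| ^ p) ∂γ with hK'def
  have hI'alt : ∫⁻ v, fE (EuclideanSpace.single i (1:ℝ)) v ∂ν = I' :=
    lintegral_congr fun v => by rw [hfEdef]; simp only [hsingle_inner]
  have hK'alt : ∫⁻ g, fE (EuclideanSpace.single i (1:ℝ)) g ∂γ = K' :=
    lintegral_congr fun g => by rw [hfEdef]; simp only [hsingle_inner]
  -- step h1 : inner ν integral
  have h1 : ∀ g : EuclideanSpace ℝ (Fin N), ∫⁻ v, fE g v ∂ν = ENNReal.ofReal (‖g‖ ^ p) * I' := by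
    intro g
    rcases eq_or_ne g 0 with hg | hg
    · subst hg
      have : ∀ v : EuclideanSpace ℝ (Fin N), fE 0 v = 0 := by
        intro v
        rw [hfEdef]
        simp [Real.zero_rpow (ne_of_gt hp0)]
      rw [lintegral_congr this, lintegral_zero, norm_zero,
        Real.zero_rpow (ne_of_gt hp0), ENNReal.ofReal_zero, zero_mul]
    · set e : EuclideanSpace ℝ (Fin N) := ‖g‖⁻¹ • g with hedef
      have hne : ‖e‖ = 1 := norm_smul_inv_norm hg
      have hgnorm : (0:ℝ) < ‖g‖ := norm_pos_iff.mpr hg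
      have hginner : ∀ v : EuclideanSpace ℝ (Fin N), (inner ℝ g v : ℝ) = ‖g‖ * (inner ℝ e v : ℝ) := by
        intro v
        rw [hedef, real_inner_smul_left, ← mul_assoc,
          mul_inv_cancel₀ (ne_of_gt hgnorm), one_mul]
      have hpt : ∀ v : EuclideanSpace ℝ (Fin N), fE g v = ENNReal.ofReal (‖g‖ ^ p) * fE e v := by
        intro v
        rw [hfEdef]
        simp only
        rw [hginner v, abs_mul, abs_of_pos hgnorm,
          Real.mul_rpow (norm_nonneg g) (abs_nonneg _),
          ENNReal.ofReal_mul (by positivity)]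
      rw [lintegral_congr hpt, lintegral_const_mul _ (hfE e),
        Aeq ν νinv e (EuclideanSpace.single i (1:ℝ)) (by rw [hne, hsingle_norm]), hI'alt]
  -- step h2 : inner γ integral
  have h2 : ∀ v : EuclideanSpace ℝ (Fin N), ‖v‖ = Real.sqrt N →
      ∫⁻ g, ENNReal.ofReal (|(inner ℝ g v : ℝ)| ^ p) ∂γ
        = ENNReal.ofReal ((Real.sqrt N) ^ p) * K' := by
    intro v hv
    have hcomm : ∀ g : EuclideanSpace ℝ (Fin N), ENNReal.ofReal (|(inner ℝ g v : ℝ)| ^ p) = fE v g := by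
      intro g; rw [hfEdef]; simp only [real_inner_comm]
    rw [lintegral_congr hcomm]
    have hvn : (0:ℝ) < ‖v‖ := by
      rw [hv]; exact Real.sqrt_pos.mpr hNR
    have hvne : v ≠ 0 := by
      intro h; rw [h, norm_zero] at hvn; exact lt_irrefl _ hvn
    set u : EuclideanSpace ℝ (Fin N) := ‖v‖⁻¹ • v with hudef
    have hun : ‖u‖ = 1 := norm_smul_inv_norm hvne
    have hvinner : ∀ g : EuclideanSpace ℝ (Fin N), (inner ℝ v g : ℝ) = ‖v‖ * (inner ℝ u g : ℝ) := by
      intro g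
      rw [hudef, real_inner_smul_left, ← mul_assoc,
        mul_inv_cancel₀ (ne_of_gt hvn), one_mul]
    have hpt : ∀ g : EuclideanSpace ℝ (Fin N), fE v g = ENNReal.ofReal (‖v‖ ^ p) * fE u g := by
      intro g
      rw [hfEdef]
      simp only
      rw [hvinner g, abs_mul, abs_of_pos hvn,
        Real.mul_rpow (norm_nonneg v) (abs_nonneg _),
        ENNReal.ofReal_mul (by positivity)]
    rw [lintegral_congr hpt, lintegral_const_mul _ (hfE u),
      Aeq γ γinv u (EuclideanSpace.single i (1:ℝ)) (by rw [hun, hsingle_norm]), hK'alt, hv]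
  -- Fubini
  have hprodmeas : AEMeasurable
      (Function.uncurry fun g v : EuclideanSpace ℝ (Fin N) => ENNReal.ofReal (|(inner ℝ g v : ℝ)| ^ p))
      (γ.prod ν) := by
    have : Continuous fun q : EuclideanSpace ℝ (Fin N) × EuclideanSpace ℝ (Fin N) => |(inner ℝ q.1 q.2 : ℝ)| ^ p :=
      ((continuous_inner (𝕜 := ℝ) (E := EuclideanSpace ℝ (Fin N))).abs.rpow_const fun _ => Or.inr hp0')
    exact (this.measurable.ennreal_ofReal).aemeasurable
  have hKey : (∫⁻ g, ENNReal.ofReal (‖g‖ ^ p) ∂γ) * I'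
      = ENNReal.ofReal ((Real.sqrt N) ^ p) * K' := by
    have hJ1 : ∫⁻ g, (∫⁻ v, ENNReal.ofReal (|(inner ℝ g v : ℝ)| ^ p) ∂ν) ∂γ
        = (∫⁻ g, ENNReal.ofReal (‖g‖ ^ p) ∂γ) * I' := by
      rw [lintegral_congr fun g => h1 g]
      exact lintegral_mul_const _ (hcontnp.measurable.ennreal_ofReal)
    have hJ2 : ∫⁻ g, (∫⁻ v, ENNReal.ofReal (|(inner ℝ g v : ℝ)| ^ p) ∂ν) ∂γ
        = ENNReal.ofReal ((Real.sqrt N) ^ p) * K' := by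
      rw [lintegral_lintegral_swap hprodmeas]
      rw [lintegral_congr_ae (hsph.mono fun v hv => h2 v hv)]
      rw [lintegral_const, measure_univ, mul_one]
    rw [← hJ1, hJ2]
  -- values
  have hK' : K' = ENNReal.ofReal (gp * c1 ^ (N - 1)) := by
    rw [hK'def, γreal (fun g : EuclideanSpace ℝ (Fin N) => |g i| ^ p) (measurable_coord_rpow i hp0')
      (fun g => by positivity) iKp, hKp]
  have hG' : ∫⁻ g, ENNReal.ofReal (‖g‖ ^ p) ∂γ
      = ENNReal.ofReal (∫ g : EuclideanSpace ℝ (Fin N), ‖g‖ ^ p * exp (-‖g‖ ^ 2)) :=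
    γreal _ hcontnp.measurable (fun g => by positivity) iGp
  -- combine
  set D : ℝ := S ^ (p / 2) * c1 ^ N with hDdef
  have hD : 0 < D := by
    have := Real.rpow_pos_of_pos hS (p / 2)
    positivity
  have hle : I' ≤ ENNReal.ofReal ((Real.sqrt N) ^ p * (gp * c1 ^ (N - 1)) / D) := by
    have hB : ENNReal.ofReal D ≤ ∫⁻ g, ENNReal.ofReal (‖g‖ ^ p) ∂γ := by
      rw [hG']
      exact ENNReal.ofReal_le_ofReal hGp_low
    have hmul : I' * ENNReal.ofReal D
        ≤ ENNReal.ofReal ((Real.sqrt N) ^ p * (gp * c1 ^ (N - 1))) := by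
      calc I' * ENNReal.ofReal D = ENNReal.ofReal D * I' := by rw [mul_comm]
        _ ≤ (∫⁻ g, ENNReal.ofReal (‖g‖ ^ p) ∂γ) * I' := mul_le_mul_left hB _
        _ = ENNReal.ofReal ((Real.sqrt N) ^ p) * K' := hKey
        _ = ENNReal.ofReal ((Real.sqrt N) ^ p * (gp * c1 ^ (N - 1))) := by
            rw [hK', ← ENNReal.ofReal_mul (by positivity)]
    have := (ENNReal.le_div_iff_mul_le (Or.inl ?_) (Or.inl ENNReal.ofReal_ne_top)).mpr hmul
    · rw [← ENNReal.ofReal_div_of_pos hD] at this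
      exact this
    · exact ne_of_gt (ENNReal.ofReal_pos.mpr hD)
  -- final algebra
  have halg : (Real.sqrt N) ^ p * (gp * c1 ^ (N - 1)) / D = Cp p := by
    have hsq : (Real.sqrt N) ^ p = (N:ℝ) ^ (p / 2) := by
      rw [Real.sqrt_eq_rpow, ← Real.rpow_mul hNR.le]
      congr 1
      ring
    have hSsplit : S ^ (p / 2) = (N:ℝ) ^ (p / 2) * (g2 / c1) ^ (p / 2) := by
      rw [hSdef, mul_div_assoc, Real.mul_rpow hNR.le (by positivity)]
    have hNp : (0:ℝ) < (N:ℝ) ^ (p / 2) := Real.rpow_pos_of_pos hNR _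
    have hgc : (0:ℝ) < (g2 / c1) ^ (p / 2) := Real.rpow_pos_of_pos (by positivity) _
    have hcg : (0:ℝ) < (c1 / g2) ^ (p / 2) := Real.rpow_pos_of_pos (by positivity) _
    have hprod : (c1 / g2) ^ (p / 2) * (g2 / c1) ^ (p / 2) = 1 := by
      rw [← Real.mul_rpow (by positivity) (by positivity)]
      rw [show c1 / g2 * (g2 / c1) = 1 by field_simp]
      exact Real.one_rpow _
    rw [hDdef, hsq, hSsplit, hpowN]
    unfold Cp
    rw [← hc1def, ← hg2def, ← hgpdef]
    have hc1p : (0:ℝ) < c1 ^ (N - 1) := pow_pos hc1 _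
    have key : (gp / c1) * (c1 ^ (N - 1) * c1) = gp * c1 ^ (N - 1) := by
      field_simp
    rw [div_eq_iff (by positivity)]
    calc (N:ℝ) ^ (p / 2) * (gp * c1 ^ (N - 1))
        = ((c1 / g2) ^ (p / 2) * (g2 / c1) ^ (p / 2))
            * ((N:ℝ) ^ (p / 2) * ((gp / c1) * (c1 ^ (N - 1) * c1))) := by
          rw [hprod, key]; ring
      _ = (c1 / g2) ^ (p / 2) * (gp / c1)
            * ((N:ℝ) ^ (p / 2) * (g2 / c1) ^ (p / 2) * (c1 ^ (N - 1) * c1)) := by ring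
  rw [integral_eq_lintegral_of_nonneg_ae
    (Filter.Eventually.of_forall fun v => by positivity)
    (measurable_coord_rpow i hp0').aestronglyMeasurable]
  rw [← hI'def]
  refine ENNReal.toReal_le_of_le_ofReal (Cp_nonneg p) ?_
  rw [← halg]
  exact hle


end SpinAux

open SpinAux

/-- Uniform-in-`N` `p`-th moment bound for the spin `O(N)` measure: if `p > 2` and
`κ < p / (16d(p−1)^{1−1/p} + 8dp)`, then there is a constant `C` (independent of `N`) such
that for every `N ≥ 2`, every rotation-invariant probability measure `σ` on the sphere of
radius `√N` (i.e. the uniform measure), and every coordinate `i`,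
`Σ_{x∈Λ} ∫ |Φ_x^i|^p dμ_{Λ,N,κ}(Φ) ≤ C`. -/
theorem stmt14 (d L : ℕ) (hd : 1 ≤ d) (hL : 3 ≤ L) [NeZero L] (p κ : ℝ)
    (hp : 2 < p) (hκ : 0 < κ)
    (hκ' : κ < p / (16 * d * (p - 1) ^ ((1 : ℝ) - 1 / p) + 8 * d * p)) :
    ∃ C : ℝ, 0 < C ∧ ∀ N : ℕ, 2 ≤ N →
      ∀ (σ : Measure (Sph N)) [IsProbabilityMeasure σ],
        (∀ O : EuclideanSpace ℝ (Fin N) ≃ₗᵢ[ℝ] EuclideanSpace ℝ (Fin N),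
          (σ.map (Subtype.val)).map O = σ.map (Subtype.val)) →
        ∀ i : Fin N,
          ∑ x : Site d L,
            ∫ Φ, |((Φ x : EuclideanSpace ℝ (Fin N)) i)| ^ p
              ∂(spinMeasure d L N κ σ) ≤ C := by
  classical
  refine ⟨(L:ℝ) ^ d * Cp p + 1, by
    have h := Cp_nonneg p
    have h2 : (0:ℝ) ≤ (L:ℝ) ^ d * Cp p := by positivity
    linarith, ?_⟩
  intro N hN σ _ hσ i
  have hp0' : (0:ℝ) ≤ p := by linarith
  -- notation
  set πm : Measure (Site d L → Sph N) := Measure.pi fun _ : Site d L => σ with hπmdef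
  have hπmprob : IsProbabilityMeasure πm := by infer_instance
  -- continuity of energy
  have hEn : Continuous (energy d L N κ) := by
    unfold energy
    refine continuous_const.mul ?_
    refine continuous_finset_sum _ fun x _ => continuous_finset_sum _ fun j _ => ?_
    exact ((continuous_subtype_val.comp (continuous_apply x)).inner
        (continuous_subtype_val.comp (continuous_apply _))).add
      ((continuous_subtype_val.comp (continuous_apply x)).inner
        (continuous_subtype_val.comp (continuous_apply _)))
  -- a uniform bound on the energy
  have hNE : Nonempty (Sph N) := by
    refine ⟨⟨EuclideanSpace.single ⟨0, by omega⟩ (Real.sqrt N), ?_⟩⟩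
    rw [mem_sphere_zero_iff_norm, EuclideanSpace.norm_single, Real.norm_eq_abs,
      abs_of_nonneg (Real.sqrt_nonneg _)]
  have hNEΦ : Nonempty (Site d L → Sph N) := ⟨fun _ => Classical.arbitrary _⟩
  obtain ⟨Φm, -, hΦm⟩ := isCompact_univ.exists_isMaxOn
    (Set.univ_nonempty) (hEn.abs.continuousOn)
  set B : ℝ := |energy d L N κ Φm| with hBdef
  have hBbound : ∀ Φ, |energy d L N κ Φ| ≤ B := fun Φ => hΦm (Set.mem_univ Φ)
  -- integrability and positivity of the partition function
  have iE : Integrable (fun Φ => Real.exp (energy d L N κ Φ)) πm := by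
    refine Integrable.mono' (integrable_const (Real.exp B))
      (Real.continuous_exp.comp hEn).aestronglyMeasurable
      (Filter.Eventually.of_forall fun Φ => ?_)
    rw [Real.norm_eq_abs, abs_of_pos (Real.exp_pos _)]
    exact Real.exp_le_exp.mpr ((le_abs_self _).trans (hBbound Φ))
  set Z : ℝ := ∫ Ψ, Real.exp (energy d L N κ Ψ) ∂πm with hZdef
  have hZpos : 0 < Z := by
    have h1 : ∀ Φ, Real.exp (-B) ≤ Real.exp (energy d L N κ Φ) := fun Φ =>
      Real.exp_le_exp.mpr (neg_le_of_abs_le (hBbound Φ))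
    have := integral_mono (integrable_const (Real.exp (-B))) iE h1
    rw [integral_const, probReal_univ, one_smul] at this
    exact lt_of_lt_of_le (Real.exp_pos _) this
  have hρmeas : Measurable fun Φ =>
      ENNReal.ofReal (Real.exp (energy d L N κ Φ) / Z) :=
    (((Real.continuous_exp.comp hEn).div_const Z).measurable).ennreal_ofReal
  have hspin_def : spinMeasure d L N κ σ
      = πm.withDensity (fun Φ => ENNReal.ofReal (Real.exp (energy d L N κ Φ) / Z)) := rfl
  -- spinMeasure is a probability measure
  have hspinprob : IsProbabilityMeasure (spinMeasure d L N κ σ) := by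
    constructor
    rw [hspin_def, withDensity_apply _ MeasurableSet.univ, setLIntegral_univ,
      ← ofReal_integral_eq_lintegral_ofReal (iE.div_const Z)
        (Filter.Eventually.of_forall fun Φ => by positivity)]
    rw [integral_div, ← hZdef, div_self (ne_of_gt hZpos), ENNReal.ofReal_one]
  -- rotation invariance of spinMeasure
  have hval_emb : MeasurableEmbedding (Subtype.val : Sph N → EuclideanSpace ℝ (Fin N)) :=
    MeasurableEmbedding.subtype_coe (Metric.isClosed_sphere.measurableSet)
  -- the induced map on the sphere
  have key_inv : ∀ O : EuclideanSpace ℝ (Fin N) ≃ₗᵢ[ℝ] EuclideanSpace ℝ (Fin N),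
      ∀ i : Fin N, True := fun _ _ => trivial
  -- main invariance construction
  set OS : (EuclideanSpace ℝ (Fin N) ≃ₗᵢ[ℝ] EuclideanSpace ℝ (Fin N)) → Sph N → Sph N :=
    fun O v => ⟨O (v : EuclideanSpace ℝ (Fin N)), by
      rw [mem_sphere_zero_iff_norm, O.norm_map]
      exact mem_sphere_zero_iff_norm.mp v.2⟩ with hOSdef
  have hOSmeas : ∀ O, Measurable (OS O) := by
    intro O
    refine Continuous.measurable ?_
    refine Continuous.subtype_mk ?_ _
    exact O.continuous.comp continuous_subtype_val
  have hσS : ∀ O, σ.map (OS O) = σ := by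
    intro O
    have hcomp1 : (Subtype.val : Sph N → _) ∘ (OS O)
        = (O : EuclideanSpace ℝ (Fin N) → _) ∘ (Subtype.val : Sph N → _) := rfl
    have hmaps : (σ.map (OS O)).map Subtype.val = σ.map Subtype.val := by
      rw [Measure.map_map measurable_subtype_coe (hOSmeas O), hcomp1,
        ← Measure.map_map O.continuous.measurable measurable_subtype_coe, hσ O]
    ext s hs
    have h1 := congrArg (fun m : Measure (EuclideanSpace ℝ (Fin N)) =>
      m (Subtype.val '' s)) hmaps
    rw [Measure.map_apply measurable_subtype_coe (hval_emb.measurableSet_image.mpr hs),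
      Measure.map_apply measurable_subtype_coe (hval_emb.measurableSet_image.mpr hs),
      Subtype.coe_injective.preimage_image] at h1
    exact h1
  set T : (EuclideanSpace ℝ (Fin N) ≃ₗᵢ[ℝ] EuclideanSpace ℝ (Fin N))
      → (Site d L → Sph N) → (Site d L → Sph N) := fun O Φ x => OS O (Φ x) with hTdef
  have hT : ∀ O, MeasurePreserving (T O) πm πm := by
    intro O
    exact measurePreserving_pi _ _ (fun _ => ⟨hOSmeas O, hσS O⟩)
  have hEinv : ∀ O Φ, energy d L N κ (T O Φ) = energy d L N κ Φ := by
    intro O Φ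
    have hcoe : ∀ v : Sph N, ((OS O v : EuclideanSpace ℝ (Fin N))) = O (v : EuclideanSpace ℝ (Fin N)) :=
      fun v => rfl
    simp only [energy, hTdef, hcoe, LinearIsometryEquiv.inner_map_map]
  have hspininv : ∀ O, (spinMeasure d L N κ σ).map (T O) = spinMeasure d L N κ σ := by
    intro O
    refine Measure.ext fun s hs => ?_
    rw [Measure.map_apply (hT O).measurable hs, hspin_def,
      withDensity_apply _ ((hT O).measurable hs), withDensity_apply _ hs]
    calc ∫⁻ Φ in T O ⁻¹' s, ENNReal.ofReal (Real.exp (energy d L N κ Φ) / Z) ∂πm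
        = ∫⁻ Φ in T O ⁻¹' s,
            ENNReal.ofReal (Real.exp (energy d L N κ (T O Φ)) / Z) ∂πm := by
          refine setLIntegral_congr_fun ((hT O).measurable hs)
            (fun Φ _ => ?_)
          rw [hEinv O Φ]
      _ = ∫⁻ Φ in s, ENNReal.ofReal (Real.exp (energy d L N κ Φ) / Z) ∂(πm.map (T O)) :=
          (setLIntegral_map hs hρmeas (hT O).measurable).symm
      _ = ∫⁻ Φ in s, ENNReal.ofReal (Real.exp (energy d L N κ Φ) / Z) ∂πm := by
          rw [(hT O).map_eq]
  -- the site marginal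
  have hevx : ∀ x : Site d L, Measurable
      (fun Φ : Site d L → Sph N => (Φ x : EuclideanSpace ℝ (Fin N))) := fun x =>
    measurable_subtype_coe.comp (measurable_pi_apply x)
  have hbound : ∀ x : Site d L,
      ∫ Φ, |((Φ x : EuclideanSpace ℝ (Fin N)) i)| ^ p ∂(spinMeasure d L N κ σ)
        ≤ Cp p := by
    intro x
    set ν : Measure (EuclideanSpace ℝ (Fin N)) :=
      (spinMeasure d L N κ σ).map (fun Φ => (Φ x : EuclideanSpace ℝ (Fin N))) with hνdef
    have hνprob : IsProbabilityMeasure ν :=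
      Measure.isProbabilityMeasure_map (hevx x).aemeasurable
    have hsph : ∀ᵐ v ∂ν, ‖v‖ = Real.sqrt N := by
      rw [hνdef, ae_map_iff (hevx x).aemeasurable
        ((isClosed_eq continuous_norm continuous_const).measurableSet)]
      exact Filter.Eventually.of_forall fun Φ =>
        mem_sphere_zero_iff_norm.mp (Φ x).2
    have hνinv : ∀ O : EuclideanSpace ℝ (Fin N) ≃ₗᵢ[ℝ] EuclideanSpace ℝ (Fin N),
        ν.map O = ν := by
      intro O
      rw [hνdef, Measure.map_map O.continuous.measurable (hevx x)]
      have : (O : EuclideanSpace ℝ (Fin N) → _) ∘ (fun Φ : Site d L → Sph N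
          => (Φ x : EuclideanSpace ℝ (Fin N)))
          = (fun Φ : Site d L → Sph N => (Φ x : EuclideanSpace ℝ (Fin N))) ∘ (T O) := rfl
      rw [this, ← Measure.map_map (hevx x) (hT O).measurable, hspininv O]
    have := moment_bound hp ν hsph hνinv i
    rw [hνdef, integral_map (hevx x).aemeasurable
      (measurable_coord_rpow i hp0').aestronglyMeasurable] at this
    exact this
  calc ∑ x : Site d L, ∫ Φ, |((Φ x : EuclideanSpace ℝ (Fin N)) i)| ^ p
        ∂(spinMeasure d L N κ σ)
      ≤ ∑ _x : Site d L, Cp p := Finset.sum_le_sum fun x _ => hbound x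
    _ = (Fintype.card (Site d L) : ℝ) * Cp p := by
        rw [Finset.sum_const, Finset.card_univ, nsmul_eq_mul]
    _ = (L:ℝ) ^ d * Cp p := by
        rw [Fintype.card_fun, ZMod.card, Fintype.card_fin]
        push_cast
        ring
    _ ≤ (L:ℝ) ^ d * Cp p + 1 := by linarith
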